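/- arXiv:1406.6672 — 6 statements merged into one kernel-verified Lean document; each statement's English description precedes it below -/
import Mathlib

section
/- If 𝒯 is a balanced collection of subsets of R (i.e., there are nonnegative coefficients λ_T with Σ_{T∈𝒯} λ_T · 1_T = 1_R), then the sets K_T for T ∈ 𝒯 cover the simplex Δ(R): for every price vector p there is some T ∈ 𝒯 with |A_T(p)| ≥ Σ_{r∈T} c[r]. -/
open Finset

/-- If `𝒯` is a balanced collection of subsets of `R`, then the sets `K_T`, `T ∈ 𝒯`,
cover the simplex: for every price vector `p` there is `T ∈ 𝒯` with
`|A_T(p)| ≥ ∑_{r∈T} c[r]`. -/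
theorem stmt1 {N R : Type*} [Fintype N] [Fintype R] [DecidableEq R]
    (L : N → (R → ℝ) → Finset R) (c : R → ℕ)
    (hc : ∑ r, c r = Fintype.card N)
    (hA1 : ∀ (i : N) (p : R → ℝ), p ∈ stdSimplex ℝ R → (L i p).Nonempty)
    (𝒯 : Finset (Finset R)) (lam : Finset R → ℝ)
    (hlam : ∀ T ∈ 𝒯, 0 ≤ lam T)
    (hbal : ∀ r : R, ∑ T ∈ 𝒯, lam T * (if r ∈ T then 1 else 0) = 1)
    (p : R → ℝ) (hp : p ∈ stdSimplex ℝ R) :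
    ∃ T ∈ 𝒯, ∑ r ∈ T, c r ≤ (Finset.univ.filter (fun i => (L i p ∩ T).Nonempty)).card := by
  by_contra hcon
  push_neg at hcon
  -- R is nonempty since p sums to 1
  have hR : Nonempty R := by
    by_contra h
    rw [not_nonempty_iff] at h
    have h2 := hp.2
    simp [Finset.univ_eq_empty] at h2
  obtain ⟨r0⟩ := hR
  -- choose a best room for each agent
  choose f hf using fun i => hA1 i p hp
  -- lower bound: card N ≤ ∑ lam T * |A_T|
  have step1 : (Fintype.card N : ℝ) ≤ ∑ T ∈ 𝒯, lam T *
      ((Finset.univ.filter (fun i => (L i p ∩ T).Nonempty)).card : ℝ) := by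
    have h1 : ∀ i : N, (1:ℝ) ≤ ∑ T ∈ 𝒯, lam T *
        (if (L i p ∩ T).Nonempty then 1 else 0) := by
      intro i
      calc (1:ℝ) = ∑ T ∈ 𝒯, lam T * (if f i ∈ T then 1 else 0) := (hbal (f i)).symm
        _ ≤ _ := by
          apply Finset.sum_le_sum
          intro T hT
          by_cases h : f i ∈ T
          · have hne : (L i p ∩ T).Nonempty := ⟨f i, Finset.mem_inter.2 ⟨hf i, h⟩⟩
            simp [h, hne]
          · rw [if_neg h, mul_zero]
            split_ifs with h2 <;> simp [hlam T hT]
    calc (Fintype.card N : ℝ) = ∑ _i : N, (1:ℝ) := by simp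
      _ ≤ ∑ i : N, ∑ T ∈ 𝒯, lam T * (if (L i p ∩ T).Nonempty then 1 else 0) :=
          Finset.sum_le_sum fun i _ => h1 i
      _ = ∑ T ∈ 𝒯, ∑ i : N, lam T * (if (L i p ∩ T).Nonempty then 1 else 0) :=
          Finset.sum_comm
      _ = ∑ T ∈ 𝒯, lam T *
          ((Finset.univ.filter (fun i => (L i p ∩ T).Nonempty)).card : ℝ) := by
          apply Finset.sum_congr rfl
          intro T _
          rw [← Finset.mul_sum, Finset.sum_boole]
  -- ∑ lam T * (∑ r ∈ T, c r) = card N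
  have step2 : ∑ T ∈ 𝒯, lam T * ((∑ r ∈ T, c r : ℕ) : ℝ) = (Fintype.card N : ℝ) := by
    calc ∑ T ∈ 𝒯, lam T * ((∑ r ∈ T, c r : ℕ) : ℝ)
        = ∑ T ∈ 𝒯, ∑ r : R, lam T * (if r ∈ T then (c r : ℝ) else 0) := by
          apply Finset.sum_congr rfl
          intro T _
          rw [← Finset.mul_sum, Finset.sum_ite_mem, Finset.univ_inter, Nat.cast_sum]
      _ = ∑ r : R, ∑ T ∈ 𝒯, lam T * (if r ∈ T then (c r : ℝ) else 0) := Finset.sum_comm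
      _ = ∑ r : R, (c r : ℝ) * ∑ T ∈ 𝒯, lam T * (if r ∈ T then 1 else 0) := by
          apply Finset.sum_congr rfl
          intro r _
          rw [Finset.mul_sum]
          apply Finset.sum_congr rfl
          intro T _
          split_ifs <;> ring
      _ = ∑ r : R, (c r : ℝ) := by
          apply Finset.sum_congr rfl
          intro r _
          rw [hbal r, mul_one]
      _ = (Fintype.card N : ℝ) := by rw [← Nat.cast_sum, hc]
  -- upper bound using hcon
  have step3 : ∑ T ∈ 𝒯, lam T *
      ((Finset.univ.filter (fun i => (L i p ∩ T).Nonempty)).card : ℝ)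
      ≤ (Fintype.card N : ℝ) - ∑ T ∈ 𝒯, lam T := by
    calc ∑ T ∈ 𝒯, lam T *
        ((Finset.univ.filter (fun i => (L i p ∩ T).Nonempty)).card : ℝ)
        ≤ ∑ T ∈ 𝒯, lam T * (((∑ r ∈ T, c r : ℕ) : ℝ) - 1) := by
          apply Finset.sum_le_sum
          intro T hT
          apply mul_le_mul_of_nonneg_left _ (hlam T hT)
          have h := hcon T hT
          have h' : ((Finset.univ.filter (fun i => (L i p ∩ T).Nonempty)).card : ℝ) + 1
              ≤ ((∑ r ∈ T, c r : ℕ) : ℝ) := by exact_mod_cast h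
          linarith
      _ = ∑ T ∈ 𝒯, lam T * ((∑ r ∈ T, c r : ℕ) : ℝ) - ∑ T ∈ 𝒯, lam T := by
          rw [← Finset.sum_sub_distrib]
          apply Finset.sum_congr rfl
          intro T _
          ring
      _ = (Fintype.card N : ℝ) - ∑ T ∈ 𝒯, lam T := by rw [step2]
  have hsum0 : ∑ T ∈ 𝒯, lam T ≤ 0 := by linarith
  have hzero : ∀ T ∈ 𝒯, lam T = 0 :=
    (Finset.sum_eq_zero_iff_of_nonneg hlam).1
      (le_antisymm hsum0 (Finset.sum_nonneg hlam))
  have h1 := hbal r0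
  rw [Finset.sum_eq_zero (fun T hT => by rw [hzero T hT, zero_mul])] at h1
  exact one_ne_zero h1.symm
end

section
/- Given a price vector p* such that for every T ⊆ supp(p*) the set of agents demanding some room of T has size at least Σ_{r∈T} c[r], and such that all agents like all free rooms (rooms outside supp(p*)), there exists an assignment f* : N → R with |f*⁻¹(r)| = c[r] for every r and f*(i) ∈ L_i(p*) for every agent i. -/
open Finset

/-- Given a price vector `p*` at which the demand for every subset `T` of the support
meets the capacity of `T`, and all agents like all free rooms, there is a
capacity-respecting assignment giving every agent a room she likes. -/
theorem stmt4 {N R : Type*} [Fintype N] [Fintype R] [DecidableEq R]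
    (L : N → (R → ℝ) → Finset R) (c : R → ℕ)
    (hc : ∑ r, c r = Fintype.card N)
    (p : R → ℝ) (hp : p ∈ stdSimplex ℝ R)
    (hfree : ∀ (i : N) (r : R), p r = 0 → r ∈ L i p)
    (hdem : ∀ T : Finset R, (∀ r ∈ T, 0 < p r) →
      ∑ r ∈ T, c r ≤ (Finset.univ.filter (fun i => (L i p ∩ T).Nonempty)).card) :
    ∃ f : N → R,
      (∀ r : R, (Finset.univ.filter (fun i => f i = r)).card = c r) ∧
      ∀ i : N, f i ∈ L i p := by
  classical
  set t : N → Finset (Σ r : R, Fin (c r)) :=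
    fun i => (L i p).sigma (fun r => Finset.univ) with ht
  have hall : ∀ s : Finset N, s.card ≤ (s.biUnion t).card := by
    intro s
    rcases s.eq_empty_or_nonempty with rfl | ⟨i0, hi0⟩
    · simp
    set U : Finset R := s.biUnion (fun i => L i p) with hU
    have hbu : s.biUnion t = U.sigma (fun r => Finset.univ) := by
      ext x
      simp only [ht, hU, Finset.mem_sigma, Finset.mem_biUnion, Finset.mem_univ, and_true]
    rw [hbu, Finset.card_sigma]
    simp only [Finset.card_univ, Fintype.card_fin]
    set T : Finset R := (Finset.univ.filter (fun r => 0 < p r)) \ U with hT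
    have hTpos : ∀ r ∈ T, 0 < p r := by
      intro r hr
      rw [hT, Finset.mem_sdiff, Finset.mem_filter] at hr
      exact hr.1.2
    have h1 := hdem T hTpos
    have h2 : (Finset.univ.filter (fun i => (L i p ∩ T).Nonempty)) ⊆ Finset.univ \ s := by
      intro i hi
      simp only [Finset.mem_filter] at hi
      obtain ⟨r, hr⟩ := hi.2
      rw [Finset.mem_inter] at hr
      simp only [Finset.mem_sdiff, Finset.mem_univ, true_and]
      intro his
      have hrU : r ∈ U := Finset.mem_biUnion.mpr ⟨i, his, hr.1⟩
      have := hr.2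
      rw [hT, Finset.mem_sdiff] at this
      exact this.2 hrU
    have h3 : (Finset.univ.filter (fun i => (L i p ∩ T).Nonempty)).card ≤
        Fintype.card N - s.card := by
      calc _ ≤ (Finset.univ \ s).card := Finset.card_le_card h2
        _ = Fintype.card N - s.card := by
          rw [Finset.card_sdiff_of_subset (Finset.subset_univ s), Finset.card_univ]
    have h4 : Finset.univ \ T ⊆ U := by
      intro r hr
      rw [hT, Finset.mem_sdiff] at hr
      by_cases hU' : r ∈ U
      · exact hU'
      · exfalso
        apply hr.2
        rw [Finset.mem_sdiff, Finset.mem_filter]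
        refine ⟨⟨Finset.mem_univ r, ?_⟩, hU'⟩
        rcases lt_or_eq_of_le (hp.1 r) with h | h
        · exact h
        · exact absurd (Finset.mem_biUnion.mpr ⟨i0, hi0, hfree i0 r h.symm⟩) hU'
    have h5 : ∑ r ∈ Finset.univ \ T, c r ≤ ∑ r ∈ U, c r :=
      Finset.sum_le_sum_of_subset h4
    have h6 : ∑ r ∈ T, c r + ∑ r ∈ Finset.univ \ T, c r = Fintype.card N := by
      rw [add_comm, Finset.sum_sdiff (Finset.subset_univ T), hc]
    have hsn : s.card ≤ Fintype.card N := by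
      simpa using Finset.card_le_card (Finset.subset_univ s)
    omega
  obtain ⟨f, hfinj, hft⟩ := (Finset.all_card_le_biUnion_card_iff_exists_injective t).mp hall
  refine ⟨fun i => (f i).1, ?_, ?_⟩
  · -- counting
    have hle : ∀ r ∈ (Finset.univ : Finset R),
        (Finset.univ.filter (fun i => (f i).1 = r)).card ≤ c r := by
      intro r _
      have himg : (Finset.univ.filter (fun i => (f i).1 = r)).image f ⊆
          ({r} : Finset R).sigma (fun r => (Finset.univ : Finset (Fin (c r)))) := by
        intro x hx
        simp only [Finset.mem_image, Finset.mem_filter] at hx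
        obtain ⟨i, ⟨_, hi⟩, rfl⟩ := hx
        simp [Finset.mem_sigma, hi]
      calc (Finset.univ.filter (fun i => (f i).1 = r)).card
          = ((Finset.univ.filter (fun i => (f i).1 = r)).image f).card :=
            (Finset.card_image_of_injective _ hfinj).symm
        _ ≤ (({r} : Finset R).sigma (fun r => (Finset.univ : Finset (Fin (c r))))).card :=
            Finset.card_le_card himg
        _ = c r := by rw [Finset.card_sigma]; simp
    have hsum : ∑ r, (Finset.univ.filter (fun i => (f i).1 = r)).card = ∑ r, c r := by
      rw [hc, ← Finset.card_univ (α := N)]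
      exact (Finset.card_eq_sum_card_fiberwise (fun i _ => Finset.mem_univ ((f i).1))).symm
    intro r
    exact ((Finset.sum_eq_sum_iff_of_le hle).mp hsum) r (Finset.mem_univ r)
  · intro i
    have := hft i
    rw [ht, Finset.mem_sigma] at this
    exact this.1
end

section
/- Given preference correspondences L_i* on Δ(R) satisfying (A1), (A2*), and (A3), the modified correspondences L_i defined via the affine map φ sending each vertex v_r of Δ(R) to the barycenter of the opposite face — namely L_i(p) = L_i*(φ⁻¹(p)) if p is in the interior of φ(Δ(R)), L_i(p) = L_i*(φ⁻¹(p)) ∪ {r : p[r] ≤ 1/|R|} if p is on the boundary of φ(Δ(R)), and L_i(p) = {r : p[r] ≤ 1/|R|} otherwise — satisfy assumptions (A1), (A2), and (A3). -/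
open Finset

/-- The modified preferences `L`, defined from preferences `L*` satisfying (A1), (A2*),
(A3) via the affine embedding `φ` sending each vertex to the barycenter of the opposite
face (with inverse `φ⁻¹(p)[r] = 1 - (|R|-1)·p[r]`; `p` is in the interior of `φ(Δ(R))`
iff all coordinates of `φ⁻¹(p)` are positive, and in `φ(Δ(R))` iff they are
nonnegative), satisfy (A1), (A2) and (A3). -/
theorem stmt8 {N R : Type*} [Fintype R] (hR : 2 ≤ Fintype.card R)
    (Lstar : N → (R → ℝ) → Set R)
    (hA1 : ∀ (i : N) (q : R → ℝ), q ∈ stdSimplex ℝ R → (Lstar i q).Nonempty)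
    (hA2s : ∀ (i : N) (q : R → ℝ), q ∈ stdSimplex ℝ R → ∀ r ∈ Lstar i q, 0 < q r)
    (hA3 : ∀ (i : N) (r : R), IsClosed {q ∈ stdSimplex ℝ R | r ∈ Lstar i q})
    (phiInv : (R → ℝ) → (R → ℝ))
    (hphiInv : ∀ p r, phiInv p r = 1 - ((Fintype.card R : ℝ) - 1) * p r)
    (L : N → (R → ℝ) → Set R)
    (hL : ∀ (i : N) (p : R → ℝ) (r : R), r ∈ L i p ↔
      ((∀ s, 0 < phiInv p s) ∧ r ∈ Lstar i (phiInv p)) ∨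
      (((∀ s, 0 ≤ phiInv p s) ∧ ¬ (∀ s, 0 < phiInv p s)) ∧
        (r ∈ Lstar i (phiInv p) ∨ p r ≤ 1 / (Fintype.card R : ℝ))) ∨
      ((¬ (∀ s, 0 ≤ phiInv p s)) ∧ p r ≤ 1 / (Fintype.card R : ℝ))) :
    (∀ (i : N) (p : R → ℝ), p ∈ stdSimplex ℝ R → (L i p).Nonempty) ∧
    (∀ (i : N) (p : R → ℝ), p ∈ stdSimplex ℝ R → ∀ r : R, p r = 0 → r ∈ L i p) ∧
    (∀ (i : N) (r : R), IsClosed {p ∈ stdSimplex ℝ R | r ∈ L i p}) := by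
  classical
  have hcardN : 0 < Fintype.card R := by omega
  have hcard : (0:ℝ) < (Fintype.card R : ℝ) := by exact_mod_cast hcardN
  have hNe : Nonempty R := Fintype.card_pos_iff.mp hcardN
  -- phiInv maps simplex points with nonneg inverse coords into the simplex
  have hmem : ∀ p : R → ℝ, p ∈ stdSimplex ℝ R → (∀ s, 0 ≤ phiInv p s) →
      phiInv p ∈ stdSimplex ℝ R := by
    intro p hp hnn
    refine ⟨hnn, ?_⟩
    have hsum : ∑ s, p s = 1 := hp.2
    have h1 : ∑ s, phiInv p s = ∑ s, (1 - ((Fintype.card R : ℝ) - 1) * p s) :=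
      Finset.sum_congr rfl fun s _ => hphiInv p s
    rw [h1, Finset.sum_sub_distrib, ← Finset.mul_sum, hsum, Finset.sum_const,
      Finset.card_univ, nsmul_eq_mul]
    ring
  -- some coordinate is at most the average
  have hexists : ∀ p : R → ℝ, p ∈ stdSimplex ℝ R →
      ∃ r, p r ≤ 1 / (Fintype.card R : ℝ) := by
    intro p hp
    by_contra h
    push_neg at h
    have h2 : ∑ _s : R, (1:ℝ) / (Fintype.card R : ℝ) < ∑ s, p s :=
      Finset.sum_lt_sum_of_nonempty Finset.univ_nonempty (fun s _ => h s)
    rw [hp.2, Finset.sum_const, Finset.card_univ, nsmul_eq_mul] at h2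
    rw [mul_one_div, div_self (ne_of_gt hcard)] at h2
    linarith
  refine ⟨?_, ?_, ?_⟩
  · -- (A1)
    intro i p hp
    by_cases hpos : ∀ s, 0 < phiInv p s
    · obtain ⟨r, hr⟩ := hA1 i _ (hmem p hp fun s => (hpos s).le)
      exact ⟨r, (hL i p r).mpr (Or.inl ⟨hpos, hr⟩)⟩
    · by_cases hnn : ∀ s, 0 ≤ phiInv p s
      · obtain ⟨r, hr⟩ := hA1 i _ (hmem p hp hnn)
        exact ⟨r, (hL i p r).mpr (Or.inr (Or.inl ⟨⟨hnn, hpos⟩, Or.inl hr⟩))⟩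
      · obtain ⟨r, hr⟩ := hexists p hp
        exact ⟨r, (hL i p r).mpr (Or.inr (Or.inr ⟨hnn, hr⟩))⟩
  · -- (A2)
    intro i p hp r hpr
    have hle : p r ≤ 1 / (Fintype.card R : ℝ) := by rw [hpr]; positivity
    by_cases hpos : ∀ s, 0 < phiInv p s
    · exfalso
      have hq := hmem p hp fun s => (hpos s).le
      have h1 : phiInv p r = 1 := by rw [hphiInv, hpr]; ring
      have hsum := hq.2
      rw [← Finset.add_sum_erase _ _ (Finset.mem_univ r), h1] at hsum
      have hne : (Finset.univ.erase r).Nonempty := by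
        rw [← Finset.card_pos, Finset.card_erase_of_mem (Finset.mem_univ r),
          Finset.card_univ]
        omega
      have hpos' : 0 < ∑ s ∈ Finset.univ.erase r, phiInv p s :=
        Finset.sum_pos (fun s _ => hpos s) hne
      linarith
    · by_cases hnn : ∀ s, 0 ≤ phiInv p s
      · exact (hL i p r).mpr (Or.inr (Or.inl ⟨⟨hnn, hpos⟩, Or.inr hle⟩))
      · exact (hL i p r).mpr (Or.inr (Or.inr ⟨hnn, hle⟩))
  · -- (A3)
    intro i r
    set g : (R → ℝ) → (R → ℝ) := fun p s => 1 - ((Fintype.card R : ℝ) - 1) * p s with hg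
    have hgphi : ∀ p, g p = phiInv p := fun p => funext fun s => (hphiInv p s).symm
    have hgc : Continuous g :=
      continuous_pi fun s => continuous_const.sub (continuous_const.mul (continuous_apply s))
    have hD : IsClosed (stdSimplex ℝ R ∩ g ⁻¹' {q | q ∈ stdSimplex ℝ R ∧ r ∈ Lstar i q}) :=
      (isClosed_stdSimplex ℝ R).inter ((hA3 i r).preimage hgc)
    have hE : IsClosed ((stdSimplex ℝ R ∩ ⋃ s, {p : R → ℝ | g p s ≤ 0}) ∩
        {p : R → ℝ | p r ≤ 1 / (Fintype.card R : ℝ)}) := by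
      refine (((isClosed_stdSimplex ℝ R).inter (isClosed_iUnion_of_finite fun s => ?_)).inter
        (isClosed_le (continuous_apply r) continuous_const))
      exact isClosed_le ((continuous_apply s).comp hgc) continuous_const
    have hset : {p | p ∈ stdSimplex ℝ R ∧ r ∈ L i p} =
        (stdSimplex ℝ R ∩ g ⁻¹' {q | q ∈ stdSimplex ℝ R ∧ r ∈ Lstar i q}) ∪
        ((stdSimplex ℝ R ∩ ⋃ s, {p : R → ℝ | g p s ≤ 0}) ∩
          {p : R → ℝ | p r ≤ 1 / (Fintype.card R : ℝ)}) := by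
      ext p
      simp only [Set.mem_setOf_eq, Set.mem_union, Set.mem_inter_iff, Set.mem_preimage,
        Set.mem_iUnion, hgphi]
      constructor
      · rintro ⟨hp, hr⟩
        rw [hL] at hr
        rcases hr with ⟨hpos, hr⟩ | ⟨⟨hnn, hnpos⟩, hr | hr⟩ | ⟨hnn, hr⟩
        · exact Or.inl ⟨hp, hmem p hp fun s => (hpos s).le, hr⟩
        · exact Or.inl ⟨hp, hmem p hp hnn, hr⟩
        · push_neg at hnpos
          obtain ⟨s, hs⟩ := hnpos
          exact Or.inr ⟨⟨hp, s, hs⟩, hr⟩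
        · push_neg at hnn
          obtain ⟨s, hs⟩ := hnn
          exact Or.inr ⟨⟨hp, s, hs.le⟩, hr⟩
      · rintro (⟨hp, hq, hr⟩ | ⟨⟨hp, s, hs⟩, hr⟩)
        · refine ⟨hp, (hL i p r).mpr ?_⟩
          by_cases hpos : ∀ s, 0 < phiInv p s
          · exact Or.inl ⟨hpos, hr⟩
          · exact Or.inr (Or.inl ⟨⟨hq.1, hpos⟩, Or.inl hr⟩)
        · refine ⟨hp, (hL i p r).mpr ?_⟩
          have hnpos : ¬ ∀ t, 0 < phiInv p t := fun h => absurd hs (not_le.mpr (h s))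
          by_cases hnn : ∀ t, 0 ≤ phiInv p t
          · exact Or.inr (Or.inl ⟨⟨hnn, hnpos⟩, Or.inr hr⟩)
          · exact Or.inr (Or.inr ⟨hnn, hr⟩)
    rw [show {p | p ∈ stdSimplex ℝ R ∧ r ∈ L i p} = {p ∈ stdSimplex ℝ R | r ∈ L i p} from rfl] at hset
    rw [hset]
    exact hD.union hE
end

section
/- There exists a homeomorphism φ from B(R) = {p ∈ [0,1]^R : p[r] = 0 for some r} onto the simplex Δ(R) such that φ(p)[r] = 0 whenever p[r] = 1. -/
section Gale

variable {R : Type*} [Fintype R] [Nonempty R]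

open Finset

omit [Nonempty R] in
private lemma gale_S_pos (p : R → ℝ) (hp : (∀ r, p r ∈ Set.Icc (0 : ℝ) 1) ∧ ∃ r, p r = 0) :
    (1 : ℝ) ≤ ∑ s, (1 - p s) := by
  obtain ⟨r0, hr0⟩ := hp.2
  calc (1 : ℝ) = 1 - p r0 := by rw [hr0]; ring
    _ ≤ ∑ s, (1 - p s) :=
      Finset.single_le_sum (f := fun s => 1 - p s)
        (fun s _ => by show (0:ℝ) ≤ 1 - p s; linarith [(hp.1 s).2]) (mem_univ r0)

private lemma gale_M_pos (q : R → ℝ) (hq : q ∈ stdSimplex ℝ R) :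
    0 < Finset.univ.sup' univ_nonempty q := by
  by_contra h
  push_neg at h
  have : ∑ s, q s ≤ 0 := by
    apply Finset.sum_nonpos
    intro s _
    exact le_trans (Finset.le_sup' q (mem_univ s)) h
  rw [hq.2] at this; linarith

noncomputable def galeHomeo :
    {p : R → ℝ // (∀ r, p r ∈ Set.Icc (0 : ℝ) 1) ∧ ∃ r, p r = 0} ≃ₜ
    {q : R → ℝ // q ∈ stdSimplex ℝ R} where
  toFun p := ⟨fun r => (1 - p.1 r) / ∑ s, (1 - p.1 s), by
    have hS := gale_S_pos p.1 p.2
    constructor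
    · intro r
      exact div_nonneg (by linarith [(p.2.1 r).2]) (by linarith)
    · rw [← Finset.sum_div, div_self (by linarith)]⟩
  invFun q := ⟨fun r => 1 - q.1 r / Finset.univ.sup' univ_nonempty q.1, by
    have hM := gale_M_pos q.1 q.2
    constructor
    · intro r
      have h1 : q.1 r ≤ Finset.univ.sup' univ_nonempty q.1 := Finset.le_sup' q.1 (mem_univ r)
      have h2 : 0 ≤ q.1 r := q.2.1 r
      constructor
      · have := div_le_one_of_le₀ h1 hM.le
        linarith
      · have : 0 ≤ q.1 r / Finset.univ.sup' univ_nonempty q.1 := div_nonneg h2 hM.le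
        linarith
    · obtain ⟨r, _, hr⟩ := Finset.exists_mem_eq_sup' univ_nonempty q.1
      refine ⟨r, ?_⟩
      show 1 - q.1 r / Finset.univ.sup' univ_nonempty q.1 = 0
      rw [← hr, div_self hM.ne']; ring⟩
  left_inv p := by
    have hS := gale_S_pos p.1 p.2
    have hSne : (∑ s, (1 - p.1 s)) ≠ 0 := by linarith
    ext r
    simp only
    have hsup : Finset.univ.sup' univ_nonempty (fun r => (1 - p.1 r) / ∑ s, (1 - p.1 s))
        = 1 / ∑ s, (1 - p.1 s) := by
      apply le_antisymm
      · apply Finset.sup'_le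
        intro s _
        apply div_le_div_of_nonneg_right ?_ (by linarith)
        · linarith [(p.2.1 s).1]
      · obtain ⟨r0, hr0⟩ := p.2.2
        calc 1 / ∑ s, (1 - p.1 s) = (1 - p.1 r0) / ∑ s, (1 - p.1 s) := by rw [hr0]; ring_nf
          _ ≤ _ := Finset.le_sup'
            (f := fun r => (1 - p.1 r) / ∑ s, (1 - p.1 s)) (mem_univ r0)
    rw [hsup, one_div, div_eq_mul_inv, inv_inv, div_mul_cancel₀ _ hSne]
    ring
  right_inv q := by
    have hM := gale_M_pos q.1 q.2
    set M := Finset.univ.sup' univ_nonempty q.1 with hMdef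
    ext r
    simp only
    have hsum : ∑ s, (1 - (1 - q.1 s / M)) = 1 / M := by
      have : ∀ s, 1 - (1 - q.1 s / M) = q.1 s / M := fun s => by ring
      simp_rw [this, ← Finset.sum_div, q.2.2]
    show (1 - (1 - q.1 r / M)) / ∑ s, (1 - (1 - q.1 s / M)) = q.1 r
    rw [hsum]
    show (1 - (1 - q.1 r / M)) / (1 / M) = q.1 r
    have h1 : 1 - (1 - q.1 r / M) = q.1 r / M := by ring
    rw [h1, one_div, div_eq_mul_inv, inv_inv, div_mul_cancel₀ _ hM.ne']
  continuous_toFun := by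
    apply Continuous.subtype_mk
    apply continuous_pi
    intro r
    apply Continuous.div
    · exact (continuous_const.sub ((continuous_apply r).comp continuous_subtype_val))
    · exact continuous_finset_sum _ fun s _ =>
        continuous_const.sub ((continuous_apply s).comp continuous_subtype_val)
    · intro p
      have := gale_S_pos p.1 p.2
      intro h; rw [h] at this; linarith
  continuous_invFun := by
    apply Continuous.subtype_mk
    apply continuous_pi
    intro r
    apply Continuous.sub continuous_const
    apply Continuous.div
    · exact (continuous_apply r).comp continuous_subtype_val
    · exact Continuous.finset_sup'_apply univ_nonempty
        (fun s _ => (continuous_apply s).comp continuous_subtype_val)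
    · intro q
      exact (gale_M_pos q.1 q.2).ne'

end Gale

/-- There is a homeomorphism `φ` from `B(R) = {p ∈ [0,1]^R : p[r] = 0 for some r}` onto
the simplex `Δ(R)` such that `φ(p)[r] = 0` whenever `p[r] = 1`. -/
theorem stmt11 {R : Type*} [Fintype R] (hR : 2 ≤ Fintype.card R) :
    ∃ φ : {p : R → ℝ // (∀ r, p r ∈ Set.Icc (0 : ℝ) 1) ∧ ∃ r, p r = 0} ≃ₜ
          {q : R → ℝ // q ∈ stdSimplex ℝ R},
      ∀ (p : {p : R → ℝ // (∀ r, p r ∈ Set.Icc (0 : ℝ) 1) ∧ ∃ r, p r = 0}) (r : R),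
        (p : R → ℝ) r = 1 → (φ p : R → ℝ) r = 0 := by
  have : Nonempty R := Fintype.card_pos_iff.mp (by omega)
  refine ⟨galeHomeo, fun p r hr => ?_⟩
  show (1 - p.1 r) / ∑ s, (1 - p.1 s) = 0
  rw [hr]
  simp
end

section
/- Given (A3), assumption (A2°) implies assumption (A2): if for every price vector p with supp(p) ≠ R each agent likes at least one free room (supp(p)ᶜ ∩ L_i(p) ≠ ∅), and each correspondence L_i has closed graph, then for every p every free room is liked by every agent: supp(p)ᶜ ⊆ L_i(p). -/
/-- Given (A3), assumption (A2°) implies (A2): if for every `p` with nonfull support the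
agent likes some free room, and the correspondence has closed graph, then every free
room is liked at every price vector. -/
theorem stmt12 {R : Type*} [Fintype R] (hR : 2 ≤ Fintype.card R)
    (L : (R → ℝ) → Set R)
    (hA3 : ∀ r : R, IsClosed {p ∈ stdSimplex ℝ R | r ∈ L p})
    (hA2c : ∀ p ∈ stdSimplex ℝ R, (∃ r, p r = 0) → ∃ r, p r = 0 ∧ r ∈ L p) :
    ∀ p ∈ stdSimplex ℝ R, ∀ r : R, p r = 0 → r ∈ L p := by
  classical
  intro p hp r hr
  obtain ⟨hpos, hsum⟩ := hp
  set c : ℝ := (Fintype.card R : ℝ) - 1 with hc_def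
  have hcard : (2:ℝ) ≤ (Fintype.card R : ℝ) := by exact_mod_cast hR
  have hc : (1:ℝ) ≤ c := by rw [hc_def]; linarith
  have hc0 : (0:ℝ) < c := by linarith
  set ε : ℕ → ℝ := fun n => 1 / (n + 1) with hε_def
  have hε_pos : ∀ n, 0 < ε n := fun n => by positivity
  have hε_le : ∀ n, ε n ≤ 1 := by
    intro n
    rw [hε_def]
    rw [div_le_one (by positivity)]
    linarith
  set q : ℕ → R → ℝ := fun n s => if s = r then 0 else (1 - ε n) * p s + ε n / c
    with hq_def
  have hq_pos : ∀ n s, s ≠ r → 0 < q n s := by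
    intro n s hs
    simp only [hq_def, if_neg hs]
    have h1 : 0 ≤ (1 - ε n) * p s := mul_nonneg (by linarith [hε_le n]) (hpos s)
    have h2 : 0 < ε n / c := div_pos (hε_pos n) hc0
    linarith
  have hq_mem : ∀ n, q n ∈ stdSimplex ℝ R := by
    intro n
    constructor
    · intro s
      by_cases h : s = r
      · simp [hq_def, h]
      · exact (hq_pos n s h).le
    · have key : ∀ s, q n s = ((1 - ε n) * p s + ε n / c)
          - (if s = r then ε n / c else 0) := by
        intro s
        simp only [hq_def]
        split_ifs with h
        · subst h; rw [hr]; ring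
        · ring
      rw [Finset.sum_congr rfl (fun s _ => key s)]
      rw [Finset.sum_sub_distrib, Finset.sum_add_distrib, ← Finset.mul_sum, hsum,
        Finset.sum_const, Finset.sum_ite_eq' Finset.univ r]
      simp only [Finset.mem_univ, if_pos, Finset.card_univ, nsmul_eq_mul]
      have hcard' : (Fintype.card R : ℝ) = c + 1 := by rw [hc_def]; ring
      rw [hcard']
      field_simp
      ring
  have hqL : ∀ n, r ∈ L (q n) := by
    intro n
    obtain ⟨r', hr'0, hr'L⟩ := hA2c (q n) (hq_mem n) ⟨r, by simp [hq_def]⟩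
    have : r' = r := by
      by_contra h
      exact absurd hr'0 (ne_of_gt (hq_pos n r' h))
    rwa [this] at hr'L
  have htend : Filter.Tendsto q Filter.atTop (nhds p) := by
    rw [tendsto_pi_nhds]
    intro s
    by_cases h : s = r
    · subst h
      simp only [hq_def, if_pos rfl]
      rw [hr]
      exact tendsto_const_nhds
    · simp only [hq_def, if_neg h]
      have hε0 : Filter.Tendsto ε Filter.atTop (nhds 0) :=
        tendsto_one_div_add_atTop_nhds_zero_nat
      have : Filter.Tendsto (fun n => (1 - ε n) * p s + ε n / c) Filter.atTop
          (nhds ((1 - 0) * p s + 0 / c)) :=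
        ((tendsto_const_nhds.sub hε0).mul tendsto_const_nhds).add (hε0.div_const c)
      simpa using this
  exact ((hA3 r).mem_of_tendsto htend
    (Filter.Eventually.of_forall fun n => ⟨hq_mem n, hqL n⟩)).2
end

section
/- In the setting of the cake-cutting proof, the envy-free price vector p̄ obtained for the modified preferences L_i must lie in the interior of φ(Δ(R)): if p̄ were outside the image of φ then some room with price exceeding 1/|R| would be unassignable, and if p̄ were on the boundary φ(F_r) then room r would be liked by no agent yet has positive capacity, a contradiction. -/
open Finset

/-- In the cake-cutting proof, the envy-free price vector `p̄` for the modified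
preferences must lie in the interior of `φ(Δ(R))`, i.e. all coordinates of
`φ⁻¹(p̄)` are positive. -/
theorem stmt17 {N R : Type*} [Fintype N] [Fintype R] [DecidableEq R]
    (hR : 2 ≤ Fintype.card R)
    (c : R → ℕ) (hcpos : ∀ r, 0 < c r) (hc : ∑ r, c r = Fintype.card N)
    (Lstar : N → (R → ℝ) → Set R)
    (hA2s : ∀ (i : N) (q : R → ℝ), q ∈ stdSimplex ℝ R → ∀ r ∈ Lstar i q, 0 < q r)
    (phiInv : (R → ℝ) → (R → ℝ))
    (hphiInv : ∀ p r, phiInv p r = 1 - ((Fintype.card R : ℝ) - 1) * p r)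
    (L : N → (R → ℝ) → Set R)
    (hL : ∀ (i : N) (p : R → ℝ) (r : R), r ∈ L i p ↔
      ((∀ s, 0 < phiInv p s) ∧ r ∈ Lstar i (phiInv p)) ∨
      (((∀ s, 0 ≤ phiInv p s) ∧ ¬ (∀ s, 0 < phiInv p s)) ∧
        (r ∈ Lstar i (phiInv p) ∨ p r ≤ 1 / (Fintype.card R : ℝ))) ∨
      ((¬ (∀ s, 0 ≤ phiInv p s)) ∧ p r ≤ 1 / (Fintype.card R : ℝ)))
    (pbar : R → ℝ) (hpbar : pbar ∈ stdSimplex ℝ R)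
    (f : N → R)
    (hf : ∀ r : R, (Finset.univ.filter (fun i => f i = r)).card = c r)
    (hlike : ∀ i : N, f i ∈ L i pbar) :
    ∀ r : R, 0 < phiInv pbar r := by

  classical
  set m : ℝ := (Fintype.card R : ℝ) with hm
  have hm2 : (2:ℝ) ≤ m := by rw [hm]; exact_mod_cast hR
  have hassign : ∀ r : R, ∃ i : N, f i = r := by
    intro r
    have h1 : 0 < (Finset.univ.filter (fun i => f i = r)).card := by
      rw [hf r]; exact hcpos r
    obtain ⟨i, hi⟩ := Finset.card_pos.mp h1
    exact ⟨i, (Finset.mem_filter.mp hi).2⟩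
  have hnonneg : ∀ s, 0 ≤ phiInv pbar s := by
    by_contra h
    push_neg at h
    obtain ⟨s, hs⟩ := h
    obtain ⟨i, hi⟩ := hassign s
    have := (hL i pbar s).mp (hi ▸ hlike i)
    rcases this with ⟨h1, _⟩ | ⟨⟨h1, _⟩, _⟩ | ⟨_, h3⟩
    · exact absurd (h1 s) (not_lt.mpr hs.le)
    · exact absurd (h1 s) (not_le.mpr hs)
    · rw [hphiInv] at hs
      have hmpos : (0:ℝ) < m := by linarith
      have h3' : pbar s * m ≤ 1 := (le_div_iff₀ hmpos).mp h3
      have hps : 0 ≤ pbar s := hpbar.1 s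
      nlinarith [hs, h3', hps]
  by_contra h
  push_neg at h
  obtain ⟨r0, hr0⟩ := h
  have hr0' : phiInv pbar r0 = 0 := le_antisymm hr0 (hnonneg r0)
  have hnotall : ¬ (∀ s, 0 < phiInv pbar s) := by
    intro hall; exact absurd hr0' (ne_of_gt (hall r0))
  have hsimplex : phiInv pbar ∈ stdSimplex ℝ R := by
    constructor
    · exact hnonneg
    · have hsum : ∑ r, pbar r = 1 := hpbar.2
      have : ∑ r, phiInv pbar r = ∑ r : R, (1 - (m - 1) * pbar r) := by
        apply Finset.sum_congr rfl; intro r _; rw [hphiInv]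
      rw [this, Finset.sum_sub_distrib, ← Finset.mul_sum, hsum,
        Finset.sum_const, Finset.card_univ]
      push_cast
      ring
  obtain ⟨i, hi⟩ := hassign r0
  have := (hL i pbar r0).mp (hi ▸ hlike i)
  rcases this with ⟨h1, _⟩ | ⟨_, h2 | h2⟩ | ⟨h3, _⟩
  · exact hnotall h1
  · have := hA2s i (phiInv pbar) hsimplex r0 h2
    rw [hr0'] at this; exact lt_irrefl 0 this
  · have := hr0'
    rw [hphiInv] at this
    have hmpos : (0:ℝ) < m := by linarith
    have h2' : pbar r0 * m ≤ 1 := (le_div_iff₀ hmpos).mp h2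
    have hps : 0 ≤ pbar r0 := hpbar.1 r0
    nlinarith [this, h2', hps]
  · exact h3 hnonneg
end
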